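/- arXiv:0906.1793 — 4 statements merged into one kernel-verified Lean document; each statement's English description precedes it below -/
import Mathlib

section
/- Let (g_1, g_2, g_3) be a Hurwitz factorization of type (5; 2-2, 4, 4); that is, g_1, g_2, g_3 ∈ S_5 with g_1 of cycle type {2, 2}, g_2 and g_3 being 4-cycles, g_1 g_2 g_3 = 1, and ⟨g_1, g_2, g_3⟩ transitive. Then the subgroup ⟨g_1, g_2, g_3⟩ of S_5 is isomorphic as an abstract group to F_5 ⋊ F_5^×, i.e., to ZMod 5 ⋊ (ZMod 5)^× with units acting by multiplication (the affine group of order 20). -/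
/-- The natural monoid homomorphism `AddAut A →* MulAut (Multiplicative A)`. -/
def addAutToMulAut (A : Type*) [AddGroup A] : Multiplicative (AddAut A) →* MulAut (Multiplicative A) where
  toFun e := AddEquiv.toMultiplicative (Multiplicative.toAdd e)
  map_one' := rfl
  map_mul' _ _ := rfl

/-- The action of `(ZMod p)ˣ` on the additive group `ZMod p` by multiplication, as a
homomorphism `(ZMod p)ˣ →* MulAut (Multiplicative (ZMod p))`. -/
def unitsMulAction (p : ℕ) : (ZMod p)ˣ →* MulAut (Multiplicative (ZMod p)) :=
  (addAutToMulAut (ZMod p)).comp (DistribMulAction.toAddAut (ZMod p)ˣ (ZMod p))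

/-!
Conjugate the 4-cycle `g₂` to `x ↦ 2x` on `ZMod 5`. A finite check over `S₅` then shows that
either `g₁` fixes the fixed point `0` of `g₂`, which transitivity excludes, or, after possibly a
further conjugation by `swap 2 3`, both generators are affine maps `x ↦ ax + b`. Hence the
monodromy group lies in a conjugate of the affine group `ZMod 5 ⋊ (ZMod 5)ˣ`, of order 20.
Being transitive on 5 points and containing a 4-cycle, it has order divisible by 20, so it is
that conjugate.
-/

open Equiv Equiv.Perm

theorem unitsMulAction_apply {p : ℕ} (u : (ZMod p)ˣ) (b : Multiplicative (ZMod p)) :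
    (unitsMulAction p u b).toAdd = u * b.toAdd :=
  rfl

namespace ZMod

variable {p : ℕ}

def affinePerm (a : (ZMod p)ˣ) (b : ZMod p) : Perm (ZMod p) where
  toFun x := a * x + b
  invFun y := (a⁻¹ : (ZMod p)ˣ) * (y - b)
  left_inv x := by simp [← mul_assoc]
  right_inv y := by simp [← mul_assoc]

variable (p) in
def affineRepresentation :
    Multiplicative (ZMod p) ⋊[unitsMulAction p] (ZMod p)ˣ →* Perm (ZMod p) where
  toFun g := affinePerm g.right g.left.toAdd
  map_one' := by ext x; simp [affinePerm]
  map_mul' g h := by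
    ext x
    change ((g * h).right : ZMod p) * x + (g * h).left.toAdd =
      g.right * (h.right * x + h.left.toAdd) + g.left.toAdd
    rw [SemidirectProduct.mul_right, SemidirectProduct.mul_left, toAdd_mul, unitsMulAction_apply,
      Units.val_mul]
    ring

@[simp]
theorem affineRepresentation_apply (g : Multiplicative (ZMod p) ⋊[unitsMulAction p] (ZMod p)ˣ)
    (x : ZMod p) : affineRepresentation p g x = g.right * x + g.left.toAdd :=
  rfl

theorem affineRepresentation_injective : Function.Injective (affineRepresentation p) := by
  rw [injective_iff_map_eq_one]
  intro g hg
  have h₀ : g.left.toAdd = 0 := by simpa using congr($hg 0)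
  have h₁ : (g.right : ZMod p) = 1 := by simpa [h₀] using congr($hg 1)
  ext
  · exact h₀
  · exact h₁

variable (p) in
def affineGroup : Subgroup (Perm (ZMod p)) := (affineRepresentation p).range

variable (p) in
noncomputable def affineGroupEquiv :
    affineGroup p ≃* Multiplicative (ZMod p) ⋊[unitsMulAction p] (ZMod p)ˣ :=
  (MonoidHom.ofInjective affineRepresentation_injective).symm

def IsAffine (h : Perm (ZMod p)) : Prop := ∀ x, h x = (h 1 - h 0) * x + h 0

instance [NeZero p] : DecidablePred (IsAffine (p := p)) := fun h => by
  unfold IsAffine; infer_instance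

theorem mem_affineGroup_iff [Fact p.Prime] {h : Perm (ZMod p)} :
    h ∈ affineGroup p ↔ IsAffine h := by
  constructor
  · rintro ⟨g, rfl⟩ x
    simp only [affineRepresentation_apply]
    ring
  · intro hh
    have hu : h 1 - h 0 ≠ 0 := sub_ne_zero.2 (h.injective.ne one_ne_zero)
    refine ⟨⟨Multiplicative.ofAdd (h 0), Units.mk0 _ hu⟩, ?_⟩
    ext x
    exact (hh x).symm

theorem card_affineGroup [Fact p.Prime] : Nat.card (affineGroup p) = p * (p - 1) := by
  rw [Nat.card_congr (affineGroupEquiv p).toEquiv, SemidirectProduct.card, Nat.card_eq_fintype_card,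
    Nat.card_eq_fintype_card, ZMod.card_units, Fintype.card_multiplicative, ZMod.card]

end ZMod

theorem Subgroup.card_dvd_card_of_transitive {α : Type*} [Nonempty α] (H : Subgroup (Perm α))
    (htrans : ∀ x y : α, ∃ g ∈ H, g x = y) : Nat.card α ∣ Nat.card H := by
  have : MulAction.IsPretransitive H α := ⟨fun x y => by
    obtain ⟨g, hg, rfl⟩ := htrans x y
    exact ⟨⟨g, hg⟩, rfl⟩⟩
  obtain ⟨x⟩ := ‹Nonempty α›
  rw [← MulAction.index_stabilizer_of_transitive H x]
  exact Subgroup.index_dvd_card _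

theorem Equiv.Perm.exists_mem_apply_ne_of_transitive {α : Type*} [Nontrivial α]
    {S : Set (Perm α)} (htrans : ∀ x y : α, ∃ g ∈ Subgroup.closure S, g x = y) (x : α) :
    ∃ g ∈ S, g x ≠ x := by
  by_contra! hfix
  have hle : Subgroup.closure S ≤ MulAction.stabilizer (Perm α) x := (Subgroup.closure_le _).2 hfix
  obtain ⟨y, hy⟩ := exists_ne x
  obtain ⟨g, hg, rfl⟩ := htrans x y
  exact hy (hle hg)

namespace ZMod

local instance fact_prime_five : Fact (Nat.Prime 5) := ⟨Nat.prime_five⟩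

def mulTwo : Perm (ZMod 5) :=
  ⟨(2 * ·), (3 * ·), by intro x; revert x; decide, by intro x; revert x; decide⟩

-- Conjugation by `swap 2 3`, which is inversion on `(ZMod 5)ˣ`, turns `mulTwo` into `x ↦ 3 * x`;
-- half of the solutions `g` become affine only after it.
set_option maxRecDepth 10000 in
theorem fixes_zero_or_conj_isAffine : ∀ g : Perm (ZMod 5), g.cycleType = {2, 2} →
    (g * mulTwo).cycleType = {4} →
    g 0 = 0 ∨ ∃ d ∈ [1, swap 2 3], IsAffine (d⁻¹ * g * d) ∧ IsAffine (d⁻¹ * mulTwo * d) := by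
  decide

theorem exists_conj_mem_affineGroup {g₁ g₂ : Perm (ZMod 5)} (h₁ : g₁.cycleType = {2, 2})
    (h₂ : g₂.cycleType = {4}) (h₁₂ : (g₁ * g₂).cycleType = {4})
    (hfix : ∀ x, g₁ x = x → g₂ x ≠ x) :
    ∃ d : Perm (ZMod 5), d⁻¹ * g₁ * d ∈ affineGroup 5 ∧ d⁻¹ * g₂ * d ∈ affineGroup 5 := by
  obtain ⟨c, rfl⟩ : ∃ c, c * mulTwo * c⁻¹ = g₂ :=
    isConj_iff.1 (isConj_iff_cycleType_eq.2 (by rw [h₂]; decide))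
  have hg : (c⁻¹ * g₁ * c).cycleType = {2, 2} := by
    simpa [h₁] using cycleType_conj (σ := g₁) (τ := c⁻¹)
  have hgm : (c⁻¹ * g₁ * c * mulTwo).cycleType = {4} := by
    rw [show c⁻¹ * g₁ * c * mulTwo = c⁻¹ * (g₁ * (c * mulTwo * c⁻¹)) * c⁻¹⁻¹ by group,
      cycleType_conj, h₁₂]
  rcases fixes_zero_or_conj_isAffine _ hg hgm with h0 | ⟨d, -, hd₁, hd₂⟩
  · exact absurd (by simp [Perm.mul_apply, mulTwo])
      (hfix (c 0) (c.symm_apply_eq.1 (by simpa [Perm.mul_apply] using h0)))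
  · refine ⟨c * d, ?_, ?_⟩
    · rw [mem_affineGroup_iff]; convert hd₁ using 1; group
    · rw [mem_affineGroup_iff]; convert hd₂ using 1; group

theorem exists_closure_eq_map_conj_affineGroup {g₁ g₂ g₃ : Perm (ZMod 5)}
    (hc₁ : g₁.cycleType = {2, 2}) (hc₂ : g₂.cycleType = {4}) (hc₃ : g₃.cycleType = {4})
    (hprod : g₁ * g₂ * g₃ = 1)
    (htrans : ∀ x y, ∃ h ∈ Subgroup.closure ({g₁, g₂, g₃} : Set (Perm (ZMod 5))), h x = y) :
    ∃ d : Perm (ZMod 5),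
      Subgroup.closure {g₁, g₂, g₃} = (affineGroup 5).map (MulAut.conj d).toMonoidHom := by
  set G := Subgroup.closure ({g₁, g₂, g₃} : Set (Perm (ZMod 5)))
  have hg₃ : g₃ = (g₁ * g₂)⁻¹ := eq_inv_of_mul_eq_one_right hprod
  have hfix : ∀ x, g₁ x = x → g₂ x ≠ x := by
    intro x h₁x h₂x
    obtain ⟨g, hg, hgx⟩ := exists_mem_apply_ne_of_transitive htrans x
    rcases hg with rfl | rfl | rfl
    · exact hgx h₁x
    · exact hgx h₂x
    · exact hgx (by rw [hg₃, Perm.inv_eq_iff_eq, Perm.mul_apply, h₂x, h₁x])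
  obtain ⟨d, hd₁, hd₂⟩ := exists_conj_mem_affineGroup hc₁ hc₂
    (by rw [← cycleType_inv, ← hg₃, hc₃]) hfix
  set A := (affineGroup 5).map (MulAut.conj d).toMonoidHom
  have hle : G ≤ A := by
    have h₁ : g₁ ∈ A := Subgroup.mem_map_equiv.2 (by rwa [MulAut.conj_symm_apply])
    have h₂ : g₂ ∈ A := Subgroup.mem_map_equiv.2 (by rwa [MulAut.conj_symm_apply])
    rw [Subgroup.closure_le]
    rintro g (rfl | rfl | rfl)
    exacts [h₁, h₂, hg₃ ▸ A.inv_mem (A.mul_mem h₁ h₂)]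
  have h₄ : 4 ∣ Nat.card G := by
    have : orderOf g₂ = 4 := by rw [← lcm_cycleType, hc₂]; rfl
    exact this ▸ Subgroup.orderOf_dvd_natCard G (Subgroup.subset_closure (by simp))
  have h₅ : 5 ∣ Nat.card G := by
    simpa using Subgroup.card_dvd_card_of_transitive G htrans
  have hA : Nat.card A = 20 := by
    rw [Subgroup.card_map_of_injective (MulEquiv.injective _), card_affineGroup]
  exact ⟨d, Subgroup.eq_of_le_of_card_ge hle <| hA ▸ Nat.le_of_dvd Nat.card_pos
    (Nat.Coprime.mul_dvd_of_dvd_of_dvd (by norm_num) h₄ h₅ : 4 * 5 ∣ _)⟩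

end ZMod

/-- the monodromy group of any Hurwitz factorization of type
`(5; 2-2, 4, 4)` is isomorphic to `F₅ ⋊ F₅ˣ`, the affine group of order 20. -/
theorem hurwitz_5_22_4_4_monodromy
    (g₁ g₂ g₃ : Equiv.Perm (Fin 5))
    (hc₁ : g₁.cycleType = {2, 2}) (hc₂ : g₂.cycleType = {4}) (hc₃ : g₃.cycleType = {4})
    (hprod : g₁ * g₂ * g₃ = 1)
    (htrans : ∀ x y : Fin 5,
      ∃ h ∈ Subgroup.closure ({g₁, g₂, g₃} : Set (Equiv.Perm (Fin 5))), h x = y) :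
    Nonempty ((Subgroup.closure ({g₁, g₂, g₃} : Set (Equiv.Perm (Fin 5)))) ≃*
      Multiplicative (ZMod 5) ⋊[unitsMulAction 5] (ZMod 5)ˣ) := by
  -- `ZMod 5` is `Fin 5` by definition.
  obtain ⟨d, hd⟩ := ZMod.exists_closure_eq_map_conj_affineGroup hc₁ hc₂ hc₃ hprod htrans
  exact ⟨(MulEquiv.subgroupCongr hd).trans
    ((MulEquiv.subgroupMap (MulAut.conj d) _).symm.trans (ZMod.affineGroupEquiv 5))⟩
end

section
/- Let d ≥ 2 and let e_1, e_2, e_3, e_4 be integers with 2 ≤ e_1 ≤ e_2 ≤ e_3 ≤ e_4 ≤ d, e_1 + e_2 + e_3 + e_4 = 2d + 2, and d + 1 ≥ e_2 + e_3. Let m ≥ 1 be an integer. Then there exists a Hurwitz factorization (g_1, g_2, g_3, g_4) of type (d; e_1, e_2, e_3, e_4) such that the product g_3 g_4 is a single m-cycle (meaning the identity permutation when m = 1) if and only if e_4 − e_3 + 1 ≤ m ≤ 2d + 1 − e_3 − e_4 and m ≡ e_2 − e_1 + 1 (mod 2). -/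
/-!
Write `σ = g₃ g₄`. Necessity: `σ = (g₁ g₂)⁻¹` and `g₄ = g₃⁻¹ σ`, so counting moved points gives
`|supp σ| ≤ e₁ + e₂` and `e₄ ≤ e₃ + |supp σ|`, while comparing signs gives `m + 1 ≡ e₃ + e₄`
(mod 2); since `∑ eᵢ` is even, the parity makes both bounds strict.

Sufficiency rests on the cycle identity
`(c p₁ … pₖ q₁ … qₗ) · (a₁ … aₛ pₖ … p₁ c) = (a₁ … aₛ q₁ … qₗ c)`,
obtained by cutting both cycles at `c` so that the `p`-parts cancel. Take `ρ` an `m`-cycle through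
`c` and apply the identity twice, with tails `a` and `b` that together with `ρ` exhaust the `d`
points: this gives an `e₁`-cycle `α₁` and an `e₃`-cycle `α₂` with `ρα₁`, `ρα₂` cycles of lengths
`e₂`, `e₄`. Then `(α₁, (ρα₁)⁻¹, α₂⁻¹, α₂ρ)` (the last entry is conjugate to `ρα₂`) has product `1`
and `g₃ g₄ = ρ`, and it is transitive because all these cycles pass through `c`.
-/

/-- Two tuples of permutations are related by simultaneous conjugation. -/
def SimConj {d r : ℕ} (g g' : Fin r → Equiv.Perm (Fin d)) : Prop :=
  ∃ h : Equiv.Perm (Fin d), ∀ i, g' i = h * g i * h⁻¹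

/-- The subgroup generated by the entries of the tuple acts transitively on `Fin d`. -/
def TransitiveTuple {d r : ℕ} (g : Fin r → Equiv.Perm (Fin d)) : Prop :=
  ∀ x y : Fin d, ∃ h ∈ Subgroup.closure (Set.range g), h x = y

/-- `g` is a Hurwitz factorization of type `(d; C 0, …, C (r-1))`: each `g i` has cycle
type `C i`, the product `g 0 * ⋯ * g (r-1)` is the identity, and the entries generate a
transitive subgroup of `S_d`. -/
def IsHurwitz {d r : ℕ} (C : Fin r → Multiset ℕ) (g : Fin r → Equiv.Perm (Fin d)) : Prop :=
  (∀ i, (g i).cycleType = C i) ∧ (List.ofFn g).prod = 1 ∧ TransitiveTuple g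

/-- The Hurwitz number `h(d; C 0, …, C (r-1))`: the number of Hurwitz factorizations up to
simultaneous conjugation by an element of `S_d`. -/
noncomputable def hurwitzNumber (d : ℕ) {r : ℕ} (C : Fin r → Multiset ℕ) : ℕ :=
  Nat.card (Quot (fun x y : {g : Fin r → Equiv.Perm (Fin d) // IsHurwitz C g} =>
    SimConj x.1 y.1))

/-- `σ` is a single `m`-cycle; by convention a `1`-cycle means the identity. -/
def IsSingleCycleOfLength {d : ℕ} (m : ℕ) (σ : Equiv.Perm (Fin d)) : Prop :=
  if m = 1 then σ = 1 else σ.cycleType = {m}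

open Equiv Equiv.Perm List

namespace List
variable {α : Type*} {a P Q : List α} {c : α}

theorem Nodup.append_reverse_append_singleton (h : (c :: (a ++ P ++ Q)).Nodup) :
    (a ++ P.reverse ++ [c]).Nodup := by
  simp only [nodup_cons, nodup_append, mem_append, not_or] at h
  simp [nodup_append]; grind

theorem Nodup.append_append_singleton (h : (c :: (a ++ P ++ Q)).Nodup) :
    (a ++ Q ++ [c]).Nodup := by
  simp only [nodup_cons, nodup_append, mem_append, not_or] at h
  simp [nodup_append]; grind

variable [DecidableEq α]

theorem formPerm_append_cons : ∀ (l₁ l₂ : List α) (c : α),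
    formPerm (l₁ ++ c :: l₂) = formPerm (l₁ ++ [c]) * formPerm (c :: l₂)
  | [], _, _ => by simp
  | [_], _, _ => by simp [formPerm_cons_cons]
  | x :: y :: l, l₂, c => by
    have ih := formPerm_append_cons (y :: l) l₂ c
    simp only [cons_append] at ih ⊢
    rw [formPerm_cons_cons, formPerm_cons_cons, ih, mul_assoc]

theorem formPerm_append_comm {l₁ l₂ : List α} (h : (l₁ ++ l₂).Nodup) :
    formPerm (l₁ ++ l₂) = formPerm (l₂ ++ l₁) :=
  formPerm_eq_of_isRotated h isRotated_append

theorem formPerm_cons_append_mul_formPerm (h : (c :: (a ++ P ++ Q)).Nodup) :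
    formPerm (c :: (P ++ Q)) * formPerm (a ++ P.reverse ++ [c]) = formPerm (a ++ Q ++ [c]) := by
  have h₁ : (c :: P ++ Q).Nodup := h.sublist (by simp)
  have h₂ := append_assoc a _ _ ▸ h.append_reverse_append_singleton
  have h₃ := append_assoc a _ _ ▸ h.append_append_singleton
  calc formPerm (c :: (P ++ Q)) * formPerm (a ++ P.reverse ++ [c])
      = formPerm (Q ++ c :: P) * formPerm (P.reverse ++ c :: a) := by
        rw [← cons_append, formPerm_append_comm h₁, append_assoc, formPerm_append_comm h₂]
        simp
    _ = formPerm (Q ++ [c]) * formPerm (c :: P) * ((formPerm (c :: P))⁻¹ * formPerm (c :: a)) := by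
        rw [formPerm_append_cons Q, formPerm_append_cons P.reverse, ← reverse_cons,
          formPerm_reverse]
    _ = formPerm (Q ++ c :: a) := by rw [formPerm_append_cons Q a c]; group
    _ = formPerm (a ++ Q ++ [c]) := by
        rw [append_assoc, formPerm_append_comm h₃]; simp

theorem Nodup.cycleType_formPerm [Fintype α] {l : List α} (hl : l.Nodup) (hn : 2 ≤ l.length) :
    (formPerm l).cycleType = {l.length} := by
  rw [(isCycle_formPerm hl hn).cycleType, support_formPerm_of_nodup l hl, toFinset_card_of_nodup hl]
  rintro x rfl
  simp at hn

theorem Nodup.exists_mem_apply_eq {G : Subgroup (Equiv.Perm α)} {l : List α} (hl : l.Nodup)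
    (hG : formPerm l ∈ G) {x y : α} (hx : x ∈ l) (hy : y ∈ l) : ∃ σ ∈ G, σ x = y := by
  obtain ⟨i, hi, rfl⟩ := getElem_of_mem hx
  obtain ⟨j, hj, rfl⟩ := getElem_of_mem hy
  refine ⟨formPerm l ^ (j + (l.length - i)), pow_mem hG _, ?_⟩
  rw [formPerm_pow_apply_getElem l hl]
  congr 1
  rw [show i + (j + (l.length - i)) = j + l.length by omega, Nat.add_mod_right, Nat.mod_eq_of_lt hj]

end List

theorem mod_two_eq_of_neg_one_pow_eq {a b : ℕ} (h : (-1 : ℤˣ) ^ a = (-1) ^ b) : a % 2 = b % 2 := by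
  rw [Int.units_pow_eq_pow_mod_two, Int.units_pow_eq_pow_mod_two _ b] at h
  rcases Nat.mod_two_eq_zero_or_one a with ha | ha <;>
    rcases Nat.mod_two_eq_zero_or_one b with hb | hb <;> simp_all

theorem Equiv.Perm.card_support_mul_le {α : Type*} [Fintype α] [DecidableEq α] (σ τ : Perm α) :
    (σ * τ).support.card ≤ σ.support.card + τ.support.card :=
  (Finset.card_le_card (support_mul_le σ τ)).trans (Finset.card_union_le _ _)

section Hurwitz

variable {d : ℕ}

theorem transitiveTuple_of_formPerm_mem {r : ℕ} {g : Fin r → Perm (Fin d)} (c : Fin d)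
    (L : List (List (Fin d)))
    (hL : ∀ l ∈ L, l.Nodup ∧ c ∈ l ∧ formPerm l ∈ Subgroup.closure (Set.range g))
    (hcov : ∀ x, ∃ l ∈ L, x ∈ l) : TransitiveTuple g := by
  have hc (x : Fin d) : ∃ σ ∈ Subgroup.closure (Set.range g), σ x = c := by
    obtain ⟨l, hl, hx⟩ := hcov x
    obtain ⟨hnd, hcl, hG⟩ := hL l hl
    exact hnd.exists_mem_apply_eq hG hx hcl
  intro x y
  obtain ⟨σ, hσ, hσx⟩ := hc x
  obtain ⟨τ, hτ, hτy⟩ := hc y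
  exact ⟨τ⁻¹ * σ, mul_mem (inv_mem hτ) hσ, by simp [hσx, ← hτy]⟩

theorem isSingleCycleOfLength_formPerm {c : Fin d} {ys : List (Fin d)} (h : (c :: ys).Nodup) :
    IsSingleCycleOfLength (ys.length + 1) (formPerm (c :: ys)) := by
  unfold IsSingleCycleOfLength
  split_ifs with hys
  · simp [List.length_eq_zero_iff.1 (by omega : ys.length = 0)]
  · exact h.cycleType_formPerm (by simp; omega)

namespace IsSingleCycleOfLength

variable {m : ℕ} {σ : Perm (Fin d)}

theorem card_support (h : IsSingleCycleOfLength m σ) :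
    σ.support.card = if m = 1 then 0 else m := by
  unfold IsSingleCycleOfLength at h
  split_ifs at h ⊢
  · simp [h]
  · rw [← sum_cycleType, h, Multiset.sum_singleton]

theorem sign_eq (h : IsSingleCycleOfLength m σ) : sign σ = (-1) ^ (m + 1) := by
  unfold IsSingleCycleOfLength at h
  split_ifs at h with hm1
  · simp [h, hm1]
  · simp [sign_of_cycleType, h]

end IsSingleCycleOfLength

theorem IsHurwitz.card_support_mul_bounds {e₁ e₂ e₃ e₄ : ℕ} {g : Fin 4 → Perm (Fin d)}
    (hg : IsHurwitz ![{e₁}, {e₂}, {e₃}, {e₄}] g) :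
    (g 2 * g 3).support.card ≤ e₁ + e₂ ∧ e₄ ≤ e₃ + (g 2 * g 3).support.card ∧
      sign (g 2 * g 3) = (-1) ^ (e₃ + e₄) := by
  obtain ⟨hcyc, hprod, -⟩ := hg
  have hcard (i : Fin 4) : (g i).support.card = ![e₁, e₂, e₃, e₄] i := by
    rw [← sum_cycleType, hcyc i]; fin_cases i <;> rfl
  have hsign (i : Fin 4) : sign (g i) = (-1) ^ (![e₁, e₂, e₃, e₄] i + 1) := by
    rw [sign_of_cycleType, hcyc i]; fin_cases i <;> rfl
  replace hprod : g 0 * g 1 * (g 2 * g 3) = 1 := by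
    simpa [List.ofFn_succ, mul_assoc] using hprod
  refine ⟨?_, ?_, ?_⟩
  · rw [eq_inv_of_mul_eq_one_right hprod, support_inv]
    simpa [hcard] using card_support_mul_le (g 0) (g 1)
  · have := card_support_mul_le (g 2)⁻¹ (g 2 * g 3)
    rw [inv_mul_cancel_left, support_inv] at this
    simpa [hcard] using this
  · rw [Perm.sign_mul, hsign, hsign, ← pow_add]
    change (-1 : ℤˣ) ^ (e₃ + 1 + (e₄ + 1)) = _
    rw [show e₃ + 1 + (e₄ + 1) = e₃ + e₄ + 2 by omega, pow_add]
    simp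

theorem exists_isHurwitz_of_nodup {e₁ e₂ e₃ e₄ m : ℕ} {a b ys P₁ Q₁ P₂ Q₂ : List (Fin d)}
    {c : Fin d} (hnd : (c :: (a ++ ys ++ b)).Nodup) (hcov : ∀ x, x ∈ c :: (a ++ ys ++ b))
    (hys₁ : P₁ ++ Q₁ = ys) (hys₂ : P₂ ++ Q₂ = ys)
    (he₁ : a.length + P₁.length + 1 = e₁) (he₂ : a.length + Q₁.length + 1 = e₂)
    (he₃ : b.length + P₂.length + 1 = e₃) (he₄ : b.length + Q₂.length + 1 = e₄)
    (hm : ys.length + 1 = m) (h₁ : 2 ≤ e₁) (h₂ : 2 ≤ e₂) (h₃ : 2 ≤ e₃) (h₄ : 2 ≤ e₄) :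
    ∃ g : Fin 4 → Perm (Fin d), IsHurwitz ![{e₁}, {e₂}, {e₃}, {e₄}] g ∧
      IsSingleCycleOfLength m (g 2 * g 3) := by
  have hndρ : (c :: ys).Nodup := hnd.sublist (by simp)
  have hnd₁ : (c :: (a ++ P₁ ++ Q₁)).Nodup := by
    rw [append_assoc, hys₁]; exact hnd.sublist (by simp)
  have hnd₂ : (c :: (b ++ P₂ ++ Q₂)).Nodup := by
    rw [append_assoc, hys₂]
    refine (hnd.sublist ?_).perm (perm_append_comm.cons c)
    simp
  have hct {l : List (Fin d)} {e : ℕ} (hl : l.Nodup) (hle : l.length = e) (he : 2 ≤ e) :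
      (formPerm l).cycleType = {e} := hle ▸ hl.cycleType_formPerm (hle ▸ he)
  set ρ := formPerm (c :: ys)
  set α₁ := formPerm (a ++ P₁.reverse ++ [c])
  set α₂ := formPerm (b ++ P₂.reverse ++ [c])
  have hρα₁ : ρ * α₁ = formPerm (a ++ Q₁ ++ [c]) := by
    rw [← formPerm_cons_append_mul_formPerm hnd₁, hys₁]
  have hρα₂ : ρ * α₂ = formPerm (b ++ Q₂ ++ [c]) := by
    rw [← formPerm_cons_append_mul_formPerm hnd₂, hys₂]
  refine ⟨![α₁, (ρ * α₁)⁻¹, α₂⁻¹, α₂ * ρ], ⟨fun i => ?_, ?_, ?_⟩, ?_⟩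
  · fin_cases i
    · exact hct hnd₁.append_reverse_append_singleton (by simp; omega) h₁
    · exact (cycleType_inv _).trans (hρα₁ ▸ hct hnd₁.append_append_singleton (by simp; omega) h₂)
    · exact (cycleType_inv _).trans (hct hnd₂.append_reverse_append_singleton (by simp; omega) h₃)
    · have : α₂ * ρ = ρ⁻¹ * (ρ * α₂) * ρ⁻¹⁻¹ := by group
      exact this ▸ cycleType_conj.trans
        (hρα₂ ▸ hct hnd₂.append_append_singleton (by simp; omega) h₄)
  · simp [List.ofFn_succ]
  · have hg₂ : α₂⁻¹ ∈ Subgroup.closure (Set.range ![α₁, (ρ * α₁)⁻¹, α₂⁻¹, α₂ * ρ]) :=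
      Subgroup.subset_closure ⟨2, rfl⟩
    refine transitiveTuple_of_formPerm_mem c
      [a ++ P₁.reverse ++ [c], c :: ys, b ++ P₂.reverse ++ [c]] ?_ fun x => ?_
    · simp only [mem_cons, not_mem_nil, or_false]
      rintro l (rfl | rfl | rfl)
      · exact ⟨hnd₁.append_reverse_append_singleton, by simp, Subgroup.subset_closure ⟨0, rfl⟩⟩
      · exact ⟨hndρ, mem_cons_self, by simpa using mul_mem hg₂ (Subgroup.subset_closure ⟨3, rfl⟩)⟩
      · exact ⟨hnd₂.append_reverse_append_singleton, by simp, (inv_inv α₂ ▸ inv_mem hg₂ :)⟩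
    · have := hcov x
      simp only [mem_cons, mem_append, mem_reverse, exists_eq_or_imp] at this ⊢
      tauto
  · simpa [← hm] using isSingleCycleOfLength_formPerm hndρ

theorem exists_cons_append_eq_finRange {u₁ n u₂ : ℕ} (h : u₁ + n + u₂ + 1 = d) :
    ∃ (c : Fin d) (a ys b : List (Fin d)), a.length = u₁ ∧ ys.length = n ∧ b.length = u₂ ∧
      c :: (a ++ ys ++ b) = finRange d := by
  subst h
  set rest := (finRange (u₁ + n + u₂)).map Fin.succ
  refine ⟨0, rest.take u₁, (rest.drop u₁).take n, (rest.drop u₁).drop n, ?_, ?_, ?_, ?_⟩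
  · simp [rest]; omega
  · simp [rest]; omega
  · simp [rest]
  · rw [finRange_succ, append_assoc, take_append_drop, take_append_drop]

end Hurwitz

theorem admissible_single_cycle_exists_iff_of_ge_general
    (d e₁ e₂ e₃ e₄ m : ℕ) (hm : 1 ≤ m)
    (h₁ : 2 ≤ e₁) (h₁₂ : e₁ ≤ e₂) (h₂₃ : e₂ ≤ e₃)
    (hsum : e₁ + e₂ + e₃ + e₄ = 2 * d + 2)
    (hcase : e₂ + e₃ ≤ d + 1) :
    (∃ g : Fin 4 → Equiv.Perm (Fin d),
        IsHurwitz ![({e₁} : Multiset ℕ), {e₂}, {e₃}, {e₄}] g ∧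
        IsSingleCycleOfLength m (g 2 * g 3)) ↔
      (e₄ - e₃ + 1 ≤ m ∧ m ≤ 2 * d + 1 - e₃ - e₄ ∧ m % 2 = (e₂ - e₁ + 1) % 2) := by
  constructor
  · rintro ⟨g, hg, hσ⟩
    obtain ⟨hle, hge, hsign⟩ := hg.card_support_mul_bounds
    have hpar := mod_two_eq_of_neg_one_pow_eq (hσ.sign_eq.symm.trans hsign)
    have hcard := hσ.card_support
    split_ifs at hcard <;> omega
  · rintro ⟨hlo, hhi, hpar⟩
    -- `kᵢ + 1` is the number of points that the `e₁`-cycle (`e₃`-cycle) shares with `g₃ g₄`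
    obtain ⟨k₁, hk₁⟩ : ∃ k, 2 * k + e₂ + 1 = e₁ + m := ⟨(e₁ + m - e₂ - 1) / 2, by omega⟩
    obtain ⟨k₂, hk₂⟩ : ∃ k, 2 * k + e₄ + 1 = e₃ + m := ⟨(e₃ + m - e₄ - 1) / 2, by omega⟩
    obtain ⟨c, a, ys, b, ha, hys, hb, hfin⟩ :=
      exists_cons_append_eq_finRange (d := d) (u₁ := e₁ - k₁ - 1) (n := m - 1) (u₂ := e₃ - k₂ - 1)
        (by omega)
    exact exists_isHurwitz_of_nodup (hfin ▸ nodup_finRange d)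
      (fun x => hfin ▸ mem_finRange x) (take_append_drop k₁ ys) (take_append_drop k₂ ys)
      (by simp; omega) (by simp; omega) (by simp; omega) (by simp; omega) (by omega)
      h₁ (by omega) (by omega) (by omega)

/-- for `2 ≤ e₁ ≤ e₂ ≤ e₃ ≤ e₄ ≤ d`, `∑ eᵢ = 2d + 2`, and
`d + 1 ≥ e₂ + e₃`, there is a Hurwitz factorization of type `(d; e₁, e₂, e₃, e₄)` with
`g₃ g₄` a single `m`-cycle iff `e₄ − e₃ + 1 ≤ m ≤ 2d + 1 − e₃ − e₄` and
`m ≡ e₂ − e₁ + 1 (mod 2)`. -/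
theorem admissible_single_cycle_exists_iff_of_ge
    (d e₁ e₂ e₃ e₄ m : ℕ) (hd : 2 ≤ d) (hm : 1 ≤ m)
    (h₁ : 2 ≤ e₁) (h₁₂ : e₁ ≤ e₂) (h₂₃ : e₂ ≤ e₃) (h₃₄ : e₃ ≤ e₄) (h₄d : e₄ ≤ d)
    (hsum : e₁ + e₂ + e₃ + e₄ = 2 * d + 2)
    (hcase : e₂ + e₃ ≤ d + 1) :
    (∃ g : Fin 4 → Equiv.Perm (Fin d),
        IsHurwitz ![({e₁} : Multiset ℕ), {e₂}, {e₃}, {e₄}] g ∧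
        IsSingleCycleOfLength m (g 2 * g 3)) ↔
      (e₄ - e₃ + 1 ≤ m ∧ m ≤ 2 * d + 1 - e₃ - e₄ ∧ m % 2 = (e₂ - e₁ + 1) % 2) :=
  admissible_single_cycle_exists_iff_of_ge_general d e₁ e₂ e₃ e₄ m hm h₁ h₁₂ h₂₃ hsum hcase
end

section
/- Let p be a prime, k a field of characteristic p, and let e_1, e_2 be integers with 2 ≤ e_1 ≤ e_2 and e_1 + e_2 ≤ p. Then there exists a unique monic polynomial G ∈ k[y] of degree p − e_1 − e_2 such that, setting F(y) = y^{e_1} (y − 1)^{e_2} G(y), the formal derivative F′ equals γ · y^{e_1 − 1} (y − 1)^{e_2 − 1} for some γ ∈ k; moreover for this G the scalar γ is nonzero. -/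
/-!
Write `F = X ^ e₁ * (X - 1) ^ e₂ * G`. By the product rule
`F' = X ^ (e₁ - 1) * (X - 1) ^ (e₂ - 1) * L(G)` with
`L(G) = e₁ (X - 1) G + e₂ X G + X (X - 1) G'` (`derivCofactor e₁ e₂ G`), so we need `L(G)` to
be constant. On the coefficients `g_m` of `G` this is the recurrence
`(e₁ + e₂ + m) g_m = (e₁ + m + 1) g_(m+1)`, solvable downwards from `g_d = 1`
(`d = p - e₁ - e₂`) because `e₁ + e₂ + m` is a unit for `m < d`; the top equation holds
automatically since `e₁ + e₂ + d = p`.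

For uniqueness and `γ ≠ 0`: a polynomial of degree at most `p` with zero derivative is
`a + b X ^ p` in characteristic `p`, so if it vanishes at `0` and `1` it is zero. Apply this to
`F` when `γ = 0`, and to `γ₂ F₁ - γ₁ F₂` for two solutions.
-/

open Polynomial

namespace Polynomial

section Cofactor

variable {R : Type*} [CommRing R]

noncomputable def derivCofactor (e₁ e₂ : ℕ) (G : R[X]) : R[X] :=
  C (e₁ : R) * (X - 1) * G + C (e₂ : R) * X * G + X * (X - 1) * derivative G

theorem derivative_X_pow_mul_X_sub_one_pow_mul {e₁ e₂ : ℕ} (he₁ : e₁ ≠ 0) (he₂ : e₂ ≠ 0)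
    (G : R[X]) :
    derivative (X ^ e₁ * (X - 1) ^ e₂ * G) =
      X ^ (e₁ - 1) * (X - 1) ^ (e₂ - 1) * derivCofactor e₁ e₂ G := by
  obtain ⟨a, rfl⟩ := Nat.exists_eq_add_one_of_ne_zero he₁
  obtain ⟨b, rfl⟩ := Nat.exists_eq_add_one_of_ne_zero he₂
  simp only [derivCofactor, derivative_mul, derivative_pow, derivative_sub, derivative_X,
    derivative_one, sub_zero, mul_one, Nat.add_sub_cancel, Nat.cast_add, Nat.cast_one, map_add,
    map_natCast, map_one]
  ring

theorem coeff_X_mul_derivative (G : R[X]) (n : ℕ) :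
    (X * derivative G).coeff n = n * G.coeff n := by
  cases n with
  | zero => simp
  | succ m =>
    rw [coeff_X_mul, coeff_derivative]
    push_cast
    ring

private theorem derivCofactor_eq (e₁ e₂ : ℕ) (G : R[X]) :
    derivCofactor e₁ e₂ G = C (e₁ + e₂ : R) * (X * G) - C (e₁ : R) * G
      + X * (X * derivative G) - X * derivative G := by
  rw [derivCofactor, C_add]
  ring

theorem coeff_derivCofactor_zero (e₁ e₂ : ℕ) (G : R[X]) :
    (derivCofactor e₁ e₂ G).coeff 0 = -e₁ * G.coeff 0 := by
  simp [derivCofactor_eq]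

theorem coeff_derivCofactor_succ (e₁ e₂ : ℕ) (G : R[X]) (m : ℕ) :
    (derivCofactor e₁ e₂ G).coeff (m + 1) =
      (e₁ + e₂ + m) * G.coeff m - (e₁ + m + 1) * G.coeff (m + 1) := by
  simp only [derivCofactor_eq, coeff_sub, coeff_add, coeff_C_mul, coeff_X_mul,
    coeff_X_mul_derivative, coeff_derivative]
  ring

end Cofactor

section TailPolynomial

variable (k : Type*) [Field k] (e₁ e₂ d : ℕ)

noncomputable def tailCoeff (i : ℕ) : k :=
  ∏ j ∈ Finset.Ico i d, ((e₁ + j + 1 : k) / (e₁ + e₂ + j))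

noncomputable def tailPolynomial : k[X] :=
  ∑ i ∈ Finset.range (d + 1), C (tailCoeff k e₁ e₂ d i) * X ^ i

theorem coeff_tailPolynomial (n : ℕ) :
    (tailPolynomial k e₁ e₂ d).coeff n = if n ≤ d then tailCoeff k e₁ e₂ d n else 0 := by
  simp [tailPolynomial, coeff_C_mul, coeff_X_pow]

@[simp]
theorem tailCoeff_self : tailCoeff k e₁ e₂ d d = 1 := by
  simp [tailCoeff]

theorem natDegree_tailPolynomial : (tailPolynomial k e₁ e₂ d).natDegree = d := by
  refine le_antisymm (natDegree_le_iff_coeff_eq_zero.mpr fun n hn ↦ ?_)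
    (le_natDegree_of_ne_zero ?_)
  · rw [coeff_tailPolynomial, if_neg (by omega)]
  · simp [coeff_tailPolynomial]

theorem monic_tailPolynomial : (tailPolynomial k e₁ e₂ d).Monic := by
  rw [Monic, leadingCoeff, natDegree_tailPolynomial, coeff_tailPolynomial, if_pos le_rfl,
    tailCoeff_self]

variable {k e₁ e₂ d} {p : ℕ} [CharP k p]

theorem tailCoeff_recurrence (he₁ : e₁ ≠ 0) (hd : e₁ + e₂ + d = p) {m : ℕ} (hm : m < d) :
    (e₁ + e₂ + m : k) * tailCoeff k e₁ e₂ d m = (e₁ + m + 1) * tailCoeff k e₁ e₂ d (m + 1) := by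
  have hne : (e₁ + e₂ + m : k) ≠ 0 := by
    exact_mod_cast (CharP.cast_eq_zero_iff k p _).not.mpr
      (Nat.not_dvd_of_pos_of_lt (by omega) (by omega))
  rw [tailCoeff, Finset.prod_eq_prod_Ico_succ_bot hm, ← tailCoeff]
  field_simp

theorem derivCofactor_tailPolynomial (he₁ : e₁ ≠ 0) (hd : e₁ + e₂ + d = p) :
    derivCofactor e₁ e₂ (tailPolynomial k e₁ e₂ d) = C (-e₁ * tailCoeff k e₁ e₂ d 0) := by
  ext n
  cases n with
  | zero => simp [coeff_derivCofactor_zero, coeff_tailPolynomial]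
  | succ m =>
    rw [coeff_derivCofactor_succ, coeff_C, if_neg m.succ_ne_zero, coeff_tailPolynomial,
      coeff_tailPolynomial]
    rcases lt_trichotomy m d with hmd | rfl | hmd
    · rw [if_pos hmd.le, if_pos hmd.nat_succ_le, sub_eq_zero]
      exact tailCoeff_recurrence he₁ hd hmd
    · have hp : (e₁ + e₂ + m : k) = 0 := by exact_mod_cast hd ▸ CharP.cast_eq_zero k p
      simp [hp]
    · rw [if_neg (by omega), if_neg (by omega)]
      ring

end TailPolynomial

section Uniqueness

variable {R : Type*} [CommRing R] [IsDomain R] {p : ℕ} [CharP R p]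

theorem eq_zero_of_derivative_eq_zero_of_eval_zero_of_eval_one (hp : p ≠ 0) {f : R[X]}
    (hf : derivative f = 0) (hdeg : f.natDegree ≤ p) (h0 : f.eval 0 = 0) (h1 : f.eval 1 = 0) :
    f = 0 := by
  obtain ⟨a, b, hab⟩ : ∃ a b, contract p f = C a * X + C b := by
    refine exists_eq_X_add_C_of_natDegree_le_one ?_
    have := natDegree_expand p (contract p f)
    rw [expand_contract p hf hp] at this
    exact Nat.le_of_mul_le_mul_right (by omega) (Nat.pos_of_ne_zero hp)
  rw [← expand_contract p hf hp] at h0 h1 ⊢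
  rw [expand_eval, hab] at h0 h1
  obtain rfl : b = 0 := by simpa [zero_pow hp] using h0
  obtain rfl : a = 0 := by simpa using h1
  simp [hab]

variable {e₁ e₂ : ℕ}

theorem eq_zero_of_derivative_X_pow_mul_X_sub_one_pow_mul_eq_zero (he₁ : e₁ ≠ 0) (he₂ : e₂ ≠ 0)
    {Q : R[X]} (hdeg : e₁ + e₂ + Q.natDegree ≤ p)
    (hQ : derivative (X ^ e₁ * (X - 1) ^ e₂ * Q) = 0) : Q = 0 := by
  have hF : X ^ e₁ * (X - 1) ^ e₂ * Q = 0 := by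
    refine eq_zero_of_derivative_eq_zero_of_eval_zero_of_eval_one (by omega) hQ ?_ ?_ ?_
    · exact hdeg.trans' (by compute_degree)
    · simp [zero_pow he₁]
    · simp [zero_pow he₂]
  have hX1 : (X - 1 : R[X]) ≠ 0 := X_sub_C_ne_zero 1
  simpa [X_ne_zero, hX1] using hF

theorem ne_zero_of_derivative_X_pow_mul_X_sub_one_pow_mul_eq (he₁ : e₁ ≠ 0) (he₂ : e₂ ≠ 0)
    {G : R[X]} (hG : G ≠ 0) (hdeg : e₁ + e₂ + G.natDegree ≤ p) {γ : R}
    (h : derivative (X ^ e₁ * (X - 1) ^ e₂ * G) = C γ * X ^ (e₁ - 1) * (X - 1) ^ (e₂ - 1)) :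
    γ ≠ 0 := by
  rintro rfl
  exact hG <|
    eq_zero_of_derivative_X_pow_mul_X_sub_one_pow_mul_eq_zero he₁ he₂ hdeg (by simpa using h)

theorem eq_of_derivative_X_pow_mul_X_sub_one_pow_mul_eq (he₁ : e₁ ≠ 0) (he₂ : e₂ ≠ 0)
    {G₁ G₂ : R[X]} (hG₁ : G₁.Monic) (hG₂ : G₂.Monic) (hdeg : G₁.natDegree = G₂.natDegree)
    (hdeg₁ : e₁ + e₂ + G₁.natDegree ≤ p) {γ₁ γ₂ : R}
    (h₁ : derivative (X ^ e₁ * (X - 1) ^ e₂ * G₁) = C γ₁ * X ^ (e₁ - 1) * (X - 1) ^ (e₂ - 1))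
    (h₂ : derivative (X ^ e₁ * (X - 1) ^ e₂ * G₂) = C γ₂ * X ^ (e₁ - 1) * (X - 1) ^ (e₂ - 1)) :
    G₁ = G₂ := by
  have hγ₁ := ne_zero_of_derivative_X_pow_mul_X_sub_one_pow_mul_eq he₁ he₂ hG₁.ne_zero hdeg₁ h₁
  have hQ : C γ₂ * G₁ - C γ₁ * G₂ = 0 := by
    refine eq_zero_of_derivative_X_pow_mul_X_sub_one_pow_mul_eq_zero he₁ he₂
      (hdeg₁.trans' ?_) ?_
    · gcongr
      exact (natDegree_sub_le _ _).trans
        (max_le (natDegree_C_mul_le _ _) (hdeg ▸ natDegree_C_mul_le _ _))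
    · rw [show X ^ e₁ * (X - 1) ^ e₂ * (C γ₂ * G₁ - C γ₁ * G₂) =
          C γ₂ * (X ^ e₁ * (X - 1) ^ e₂ * G₁) - C γ₁ * (X ^ e₁ * (X - 1) ^ e₂ * G₂) by ring,
        derivative_sub, derivative_C_mul, derivative_C_mul, h₁, h₂]
      ring
  have hγ : γ₂ = γ₁ := by
    have := congr_arg (coeff · G₁.natDegree) hQ
    rw [coeff_sub, coeff_C_mul, coeff_C_mul, hG₁.coeff_natDegree, hdeg, hG₂.coeff_natDegree]
      at this
    simpa [sub_eq_zero] using this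
  rw [sub_eq_zero, hγ] at hQ
  exact mul_left_cancel₀ (C_ne_zero.mpr hγ₁) hQ

end Uniqueness

end Polynomial

theorem tail_cover_polynomial_exists_unique_general
    (p : ℕ) (k : Type*) [Field k] [CharP k p]
    (e₁ e₂ : ℕ) (h₁ : 2 ≤ e₁) (h₁₂ : e₁ ≤ e₂) (hsum : e₁ + e₂ ≤ p) :
    (∃! G : k[X], G.Monic ∧ G.natDegree = p - e₁ - e₂ ∧
      ∃ γ : k, derivative (X ^ e₁ * (X - 1) ^ e₂ * G) =
        C γ * X ^ (e₁ - 1) * (X - 1) ^ (e₂ - 1)) ∧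
    (∀ G : k[X], G.Monic → G.natDegree = p - e₁ - e₂ →
      ∀ γ : k, derivative (X ^ e₁ * (X - 1) ^ e₂ * G) =
        C γ * X ^ (e₁ - 1) * (X - 1) ^ (e₂ - 1) → γ ≠ 0) := by
  have he₁ : e₁ ≠ 0 := by omega
  have he₂ : e₂ ≠ 0 := by omega
  have hd : e₁ + e₂ + (p - e₁ - e₂) = p := by omega
  set G₀ := tailPolynomial k e₁ e₂ (p - e₁ - e₂)
  have hG₀ : derivative (X ^ e₁ * (X - 1) ^ e₂ * G₀) =
      C (-e₁ * tailCoeff k e₁ e₂ (p - e₁ - e₂) 0) * X ^ (e₁ - 1) * (X - 1) ^ (e₂ - 1) := by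
    rw [derivative_X_pow_mul_X_sub_one_pow_mul he₁ he₂, derivCofactor_tailPolynomial he₁ hd]
    ring
  refine ⟨⟨G₀, ⟨monic_tailPolynomial .., natDegree_tailPolynomial .., _, hG₀⟩, ?_⟩, ?_⟩
  · rintro G ⟨hG, hdeg, γ, h⟩
    exact eq_of_derivative_X_pow_mul_X_sub_one_pow_mul_eq he₁ he₂ hG (monic_tailPolynomial ..)
      (by rw [hdeg, natDegree_tailPolynomial]) (by omega) h hG₀
  · intro G hG hdeg γ h
    exact ne_zero_of_derivative_X_pow_mul_X_sub_one_pow_mul_eq he₁ he₂ hG.ne_zero (by omega) h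

/-- over a field `k` of characteristic `p`, for `2 ≤ e₁ ≤ e₂` with
`e₁ + e₂ ≤ p`, there is a unique monic polynomial `G` of degree `p − e₁ − e₂` such that
the derivative of `F = y^{e₁} (y − 1)^{e₂} G(y)` equals `γ ⬝ y^{e₁−1} (y − 1)^{e₂−1}`
for some scalar `γ`; moreover for this `G` the scalar `γ` is nonzero. -/
theorem tail_cover_polynomial_exists_unique
    (p : ℕ) (hp : p.Prime) (k : Type*) [Field k] [CharP k p]
    (e₁ e₂ : ℕ) (h₁ : 2 ≤ e₁) (h₁₂ : e₁ ≤ e₂) (hsum : e₁ + e₂ ≤ p) :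
    (∃! G : k[X], G.Monic ∧ G.natDegree = p - e₁ - e₂ ∧
      ∃ γ : k, derivative (X ^ e₁ * (X - 1) ^ e₂ * G) =
        C γ * X ^ (e₁ - 1) * (X - 1) ^ (e₂ - 1)) ∧
    (∀ G : k[X], G.Monic → G.natDegree = p - e₁ - e₂ →
      ∀ γ : k, derivative (X ^ e₁ * (X - 1) ^ e₂ * G) =
        C γ * X ^ (e₁ - 1) * (X - 1) ^ (e₂ - 1) → γ ≠ 0) :=
  tail_cover_polynomial_exists_unique_general p k e₁ e₂ h₁ h₁₂ hsum
end

section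
/- Let p be an odd prime and let a_1, a_2, a_3, a_4 be integers with 1 ≤ a_i ≤ p − 2 for each i and a_1 + a_2 + a_3 + a_4 = 2(p − 1). Consider the polynomial x^{p − a_1} (x − 1)^{p − 1 − a_2} (x − λ)^{p − 1 − a_3} with coefficients in the polynomial ring F_p[λ], regarded as a polynomial in x. Then its coefficient of x^p, which is an element c(λ) of F_p[λ], is not the zero polynomial. -/
open Polynomial

/-!
Writing `λ` for the inner variable, the coefficient of `x^p` is that of `x^a` in
`(x - 1)^m (x - λ)^n`, where `m = p - 1 - a₂`, `n = p - 1 - a₃` and `a = min a₁ p`, namely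
`∑_{j + k = a} (-1)^{m - j} C(m, j) C(n, k) (-λ)^{n - k}`.
Distinct `k` give distinct powers of `λ`, so no two terms cancel, and since `m, n < p` the
binomial coefficients do not vanish modulo `p`. The balancing condition `∑ aᵢ = 2(p - 1)`
forces `a ≤ m + n`, so the sum has a term.
-/

theorem Nat.cast_choose_ne_zero_of_lt {R : Type*} [AddMonoidWithOne R] {p : ℕ} [CharP R p]
    (hp : p.Prime) {n k : ℕ} (hn : n < p) (hk : k ≤ n) : (n.choose k : R) ≠ 0 := by
  rw [Ne, CharP.cast_eq_zero_iff R p]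
  exact (Nat.Prime.coprime_iff_not_dvd hp).mp (hp.coprime_choose_of_lt hn hk)

namespace Polynomial

variable {R : Type*} [CommRing R]

theorem coeff_X_sub_C_pow (r : R) (n k : ℕ) :
    ((X - C r) ^ n).coeff k = (-r) ^ (n - k) * n.choose k := by
  rw [sub_eq_add_neg, ← map_neg, coeff_X_add_C_pow]

theorem coeff_X_sub_one_pow (m j : ℕ) :
    ((X - 1 : R[X]) ^ m).coeff j = (-1 : R) ^ (m - j) * m.choose j := by
  rw [← C_1, coeff_X_sub_C_pow]

theorem coeff_X_sub_C_X_pow (n k : ℕ) :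
    ((X - C X : R[X][X]) ^ n).coeff k = C ((-1 : R) ^ (n - k) * n.choose k) * X ^ (n - k) := by
  rw [coeff_X_sub_C_pow, neg_pow]
  simp only [map_mul, map_pow, map_neg, map_one, map_natCast]
  ring

theorem coeff_coeff_X_sub_one_pow_mul_X_sub_C_X_pow (m : ℕ) {n a k : ℕ} (hkn : k ≤ n)
    (hka : k ≤ a) :
    (((X - 1) ^ m * (X - C X : R[X][X]) ^ n).coeff a).coeff (n - k) =
      (-1 : R) ^ (m - (a - k)) * m.choose (a - k) * ((-1) ^ (n - k) * n.choose k) := by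
  have coeff_summand (j l : ℕ) :
      (((X - 1 : R[X][X]) ^ m).coeff j * ((X - C X : R[X][X]) ^ n).coeff l).coeff (n - k) =
        (-1 : R) ^ (m - j) * m.choose j * ((-1) ^ (n - l) * n.choose l) *
          if n - k = n - l then 1 else 0 := by
    rw [coeff_X_sub_one_pow, coeff_X_sub_C_X_pow, ← C_1, ← C_neg, ← C_pow, ← C_eq_natCast,
      ← C_mul, ← mul_assoc, ← C_mul, coeff_C_mul, coeff_X_pow, mul_ite, mul_one, mul_zero]
  rw [coeff_mul, finsetSum_coeff, Finset.sum_eq_single (a - k, k)]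
  · rw [coeff_summand, if_pos rfl, mul_one]
  · rintro ⟨j, l⟩ hjl hne
    rw [Finset.HasAntidiagonal.mem_antidiagonal] at hjl
    rw [coeff_summand]
    by_cases hl : l ≤ n
    · rw [if_neg (by grind), mul_zero]
    · rw [Nat.choose_eq_zero_of_lt (not_le.mp hl), Nat.cast_zero, mul_zero, mul_zero, zero_mul]
  · exact fun h ↦ absurd (Finset.HasAntidiagonal.mem_antidiagonal.mpr (Nat.sub_add_cancel hka)) h

theorem coeff_X_sub_one_pow_mul_X_sub_C_X_pow_ne_zero [IsDomain R] {p : ℕ} [CharP R p]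
    (hp : p.Prime) {m n a : ℕ} (hm : m < p) (hn : n < p) (ha : a ≤ m + n) :
    ((X - 1) ^ m * (X - C X : R[X][X]) ^ n).coeff a ≠ 0 := by
  intro h
  have hcoeff := coeff_coeff_X_sub_one_pow_mul_X_sub_C_X_pow (R := R) m
    (show a - m ≤ n by omega) (Nat.sub_le a m)
  rw [h, coeff_zero] at hcoeff
  have hsign (e : ℕ) : ((-1) ^ e : R) ≠ 0 := pow_ne_zero e (neg_ne_zero.mpr one_ne_zero)
  exact mul_ne_zero (mul_ne_zero (hsign _) (Nat.cast_choose_ne_zero_of_lt hp hm (by omega)))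
    (mul_ne_zero (hsign _) (Nat.cast_choose_ne_zero_of_lt hp hn (by omega))) hcoeff.symm

end Polynomial

theorem hasse_invariant_polynomial_ne_zero_general
    (p : ℕ) (hp : p.Prime)
    (a₁ a₂ a₃ a₄ : ℕ)
    (hsum : a₁ + a₂ + a₃ + a₄ = 2 * (p - 1)) :
    ((X ^ (p - a₁) * (X - 1) ^ (p - 1 - a₂) *
        (X - C (X : (ZMod p)[X])) ^ (p - 1 - a₃) :
      Polynomial ((ZMod p)[X]))).coeff p ≠ 0 := by
  have := Fact.mk hp
  have hp2 := hp.two_le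
  rw [mul_assoc, coeff_X_pow_mul', if_pos (Nat.sub_le p a₁)]
  exact coeff_X_sub_one_pow_mul_X_sub_C_X_pow_ne_zero hp (by omega) (by omega) (by omega)

/-- for `p` an odd prime and `1 ≤ aᵢ ≤ p − 2` with
`a₁ + a₂ + a₃ + a₄ = 2(p − 1)`, the coefficient of `x^p` in
`x^{p−a₁} (x − 1)^{p−1−a₂} (x − λ)^{p−1−a₃}`, viewed as a polynomial in `x` over
`F_p[λ]`, is a nonzero polynomial in `λ`. -/
theorem hasse_invariant_polynomial_ne_zero
    (p : ℕ) (hp : p.Prime) (hodd : Odd p)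
    (a₁ a₂ a₃ a₄ : ℕ)
    (h₁ : 1 ≤ a₁) (h₂ : 1 ≤ a₂) (h₃ : 1 ≤ a₃) (h₄ : 1 ≤ a₄)
    (h₁' : a₁ ≤ p - 2) (h₂' : a₂ ≤ p - 2) (h₃' : a₃ ≤ p - 2) (h₄' : a₄ ≤ p - 2)
    (hsum : a₁ + a₂ + a₃ + a₄ = 2 * (p - 1)) :
    ((X ^ (p - a₁) * (X - 1) ^ (p - 1 - a₂) *
        (X - C (X : (ZMod p)[X])) ^ (p - 1 - a₃) :
      Polynomial ((ZMod p)[X]))).coeff p ≠ 0 :=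
  hasse_invariant_polynomial_ne_zero_general p hp a₁ a₂ a₃ a₄ hsum
end
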